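/- Let (V,E,Ψ) be a strongly connected planar box-like self-affine GIFS in which every T_e is diagonal, with positive weights (p_e) and graph-directed measure family (μ_v)_{v∈V}, and fix q≥0. Then the set of pairs (x,y)∈ℝ² with ρ(F^{(q)}_{x,y})=1 and min{τ_A(q), γ_B(q)−τ_B(q)} ≤ x ≤ max{τ_A(q), γ_B(q)−τ_B(q)} equals the set of pairs (x,y)∈ℝ² with ρ(F^{(q)}_{x,y})=1 and min{τ_B(q), γ_A(q)−τ_A(q)} ≤ y ≤ max{τ_B(q), γ_A(q)−τ_A(q)}. -/

import Mathlib

open MeasureTheory Filter Set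
open scoped Classical

noncomputable section

namespace LqGIFS

/-! ### Mesh cubes, moment sums, L^q spectra, box dimension -/

/-- Closed cube of the `δ`-mesh of `ℝ`. -/
def meshCube1 (δ : ℝ) (k : ℤ) : Set ℝ := Set.Icc ((k : ℝ) * δ) (((k : ℝ) + 1) * δ)

/-- Closed cube of the `δ`-mesh of `ℝ²`. -/
def meshCube2 (δ : ℝ) (k : ℤ × ℤ) : Set (ℝ × ℝ) :=
  (Set.Icc ((k.1 : ℝ) * δ) (((k.1 : ℝ) + 1) * δ)) ×ˢ
    (Set.Icc ((k.2 : ℝ) * δ) (((k.2 : ℝ) + 1) * δ))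

/-- The moment sum `D_δ^q(ν)` for a measure on `ℝ` (cubes of zero measure are omitted,
so that at `q = 0` this counts the mesh cubes of positive measure). -/
def Dq1 (ν : Measure ℝ) (δ q : ℝ) : ℝ :=
  ∑' k : ℤ, if ν (meshCube1 δ k) = 0 then 0 else (ν (meshCube1 δ k)).toReal ^ q

/-- The moment sum `D_δ^q(ν)` for a measure on `ℝ²`. -/
def Dq2 (ν : Measure (ℝ × ℝ)) (δ q : ℝ) : ℝ :=
  ∑' k : ℤ × ℤ, if ν (meshCube2 δ k) = 0 then 0 else (ν (meshCube2 δ k)).toReal ^ q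

/-- The `L^q`-spectrum of a measure on `ℝ` exists and equals `s` (i.e. upper and lower
`L^q`-spectra coincide and equal `s`). -/
def HasLq1 (ν : Measure ℝ) (q s : ℝ) : Prop :=
  Tendsto (fun δ : ℝ => Real.log (Dq1 ν δ q) / (-Real.log δ))
    (nhdsWithin 0 (Set.Ioi 0)) (nhds s)

/-- The `L^q`-spectrum of a measure on `ℝ²` exists and equals `s`. -/
def HasLq2 (ν : Measure (ℝ × ℝ)) (q s : ℝ) : Prop :=
  Tendsto (fun δ : ℝ => Real.log (Dq2 ν δ q) / (-Real.log δ))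
    (nhdsWithin 0 (Set.Ioi 0)) (nhds s)

/-- Number of closed `δ`-mesh cubes of `ℝ²` meeting `X`. -/
def boxCount (X : Set (ℝ × ℝ)) (δ : ℝ) : ℕ :=
  Set.ncard {k : ℤ × ℤ | (X ∩ meshCube2 δ k).Nonempty}

/-- The box dimension of `X` exists and equals `d`. -/
def HasBoxDim (X : Set (ℝ × ℝ)) (d : ℝ) : Prop :=
  Tendsto (fun δ : ℝ => Real.log (boxCount X δ) / (-Real.log δ))
    (nhdsWithin 0 (Set.Ioi 0)) (nhds d)

/-! ### Matrices: 1-norm, spectral radius, permutation matrices -/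

/-- The 1-norm `‖A‖ = ∑_{i,j} |a_{ij}|` of a square matrix. -/
def mnorm {ι : Type*} [Fintype ι] (A : Matrix ι ι ℝ) : ℝ := ∑ i, ∑ j, |A i j|

/-- The spectral radius of a square real matrix, via the Gelfand formula. -/
def specRad {ι : Type*} [Fintype ι] [DecidableEq ι] (A : Matrix ι ι ℝ) : ℝ :=
  Filter.limsup (fun k : ℕ => (mnorm (A ^ k)) ^ ((k : ℝ)⁻¹)) Filter.atTop

/-- A square 0-1 matrix with exactly one 1 in each row and each column. -/
def IsPermMatrix {ι : Type*} (Z : Matrix ι ι ℝ) : Prop :=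
  (∀ i j, Z i j = 0 ∨ Z i j = 1) ∧ (∀ i, ∃! j, Z i j = 1) ∧ (∀ j, ∃! i, Z i j = 1)

/-! ### Directed graphs -/

/-- Strong connectivity of the finite directed graph with edge set `E`,
initial vertex map `ini` and terminal vertex map `ter`. -/
def GraphSC {V E : Type*} (ini ter : E → V) : Prop :=
  ∀ v v' : V, Relation.TransGen (fun u u' : V => ∃ e, ini e = u ∧ ter e = u') v v'

/-- The matrix `F^{(q)}_{x,y}` with entry `p_{e'}^q a_{e'}^x b_{e'}^y` at `(e,e')` when
`t(e) = i(e')`, and `0` otherwise. -/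
def FmatG {V E : Type*} (ini ter : E → V) (p a b : E → ℝ) (q x y : ℝ) :
    Matrix E E ℝ :=
  fun e e' => if ter e = ini e' then p e' ^ q * a e' ^ x * b e' ^ y else 0

/-- `f` is the entrywise product of the normalized left and right Perron vectors of the
irreducible matrix `F^{(q)}_{x,y(x)}` (spectral radius 1). -/
def IsPerronData {V E : Type*} [Fintype E] [DecidableEq E] (ini ter : E → V)
    (p a b : E → ℝ) (q x yx : ℝ) (f : E → ℝ) : Prop :=
  specRad (FmatG ini ter p a b q x yx) = 1 ∧
  ∃ u v : E → ℝ, (∀ e, 0 < u e) ∧ (∀ e, 0 < v e) ∧ (∑ e, u e) = 1 ∧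
    (FmatG ini ter p a b q x yx).mulVec u = u ∧
    (FmatG ini ter p a b q x yx).vecMul v = v ∧
    (∑ e, v e * u e) = 1 ∧ (∀ e, f e = v e * u e)

/-! ### Planar box-like graph-directed self-affine systems -/

/-- A planar box-like self-affine GIFS: a finite directed graph together with, for each
edge `e`, a contraction `ψ_e(z) = T_e z + t_e` whose linear part is the diagonal matrix
`diag(±a_e, ±b_e)` (when `diag e = true`) or the anti-diagonal matrix with entries
`±a_e` (top right) and `±b_e` (bottom left) (when `diag e = false`), `0 < a_e, b_e < 1`. -/
structure BoxLikeGIFS (V E : Type*) where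
  init : E → V
  term : E → V
  a : E → ℝ
  b : E → ℝ
  sa : E → ℝ
  sb : E → ℝ
  diag : E → Bool
  trans : E → ℝ × ℝ
  a_mem : ∀ e, a e ∈ Set.Ioo (0 : ℝ) 1
  b_mem : ∀ e, b e ∈ Set.Ioo (0 : ℝ) 1
  sa_mem : ∀ e, sa e = 1 ∨ sa e = -1
  sb_mem : ∀ e, sb e = 1 ∨ sb e = -1
  edge_exists : ∀ v, ∃ e, init e = v

namespace BoxLikeGIFS

variable {V E : Type*}

/-- The contraction `ψ_e`. -/
def map (S : BoxLikeGIFS V E) (e : E) : ℝ × ℝ → ℝ × ℝ := fun z =>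
  if S.diag e then
    (S.sa e * S.a e * z.1 + (S.trans e).1, S.sb e * S.b e * z.2 + (S.trans e).2)
  else
    (S.sa e * S.a e * z.2 + (S.trans e).1, S.sb e * S.b e * z.1 + (S.trans e).2)

def StronglyConnected (S : BoxLikeGIFS V E) : Prop := GraphSC S.init S.term

/-- The open unit square `(0,1)²`. -/
def unitSq : Set (ℝ × ℝ) := Set.Ioo (0 : ℝ) 1 ×ˢ Set.Ioo (0 : ℝ) 1

/-- The rectangular open set condition. -/
def ROSC (S : BoxLikeGIFS V E) : Prop :=
  (∀ e : E, S.map e '' unitSq ⊆ unitSq) ∧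
  ∀ e e' : E, e ≠ e' → S.init e = S.init e' →
    Disjoint (S.map e '' unitSq) (S.map e' '' unitSq)

/-- Positive weights summing to one at each vertex. -/
def IsWeights [Fintype E] (S : BoxLikeGIFS V E) (p : E → ℝ) : Prop :=
  (∀ e, 0 < p e) ∧ ∀ v : V, (∑ e : E, if S.init e = v then p e else 0) = 1

/-- `μ` is the associated graph-directed box-like self-affine measure family. -/
def IsGDMeasure [Fintype E] (S : BoxLikeGIFS V E) (p : E → ℝ)
    (μ : V → Measure (ℝ × ℝ)) : Prop :=
  (∀ v, IsProbabilityMeasure (μ v)) ∧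
  ∀ v : V, μ v =
    ∑ e : E, if S.init e = v then
      ENNReal.ofReal (p e) • ((μ (S.term e)).map (S.map e)) else (0 : Measure (ℝ × ℝ))

/-- `X` is the associated graph-directed self-affine carpet family. -/
def IsGDAttractor (S : BoxLikeGIFS V E) (X : V → Set (ℝ × ℝ)) : Prop :=
  (∀ v, (X v).Nonempty ∧ IsCompact (X v)) ∧
  ∀ v : V, X v = ⋃ e : E, ⋃ _ : S.init e = v, S.map e '' X (S.term e)

/-- The matrix `F^{(q)}_{x,y}` of the system. -/
def Fmat (S : BoxLikeGIFS V E) (p : E → ℝ) (q x y : ℝ) : Matrix E E ℝ :=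
  FmatG S.init S.term p S.a S.b q x y

/-- The `(2#E) × (2#E)` block matrix `𝒢^{(q)}_{x,y}`, indexed by `E × Bool`
(`false` = first index of the block, `true` = second). -/
def Gmat (S : BoxLikeGIFS V E) (p : E → ℝ) (τx τy : V → ℝ) (q x y : ℝ) :
    Matrix (E × Bool) (E × Bool) ℝ := fun i j =>
  if S.term i.1 = S.init j.1 then
    if S.diag j.1 then
      if i.2 = false ∧ j.2 = false then
        p j.1 ^ q * S.a j.1 ^ (x + τx (S.term j.1)) * S.b j.1 ^ (y - τx (S.term j.1))
      else if i.2 = true ∧ j.2 = true then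
        p j.1 ^ q * S.b j.1 ^ (x + τy (S.term j.1)) * S.a j.1 ^ (y - τy (S.term j.1))
      else 0
    else
      if i.2 = false ∧ j.2 = true then
        p j.1 ^ q * S.a j.1 ^ (x + τy (S.term j.1)) * S.b j.1 ^ (y - τy (S.term j.1))
      else if i.2 = true ∧ j.2 = false then
        p j.1 ^ q * S.b j.1 ^ (x + τx (S.term j.1)) * S.a j.1 ^ (y - τx (S.term j.1))
      else 0
  else 0

/-! ### Words -/

/-- An admissible word: consecutive edges are composable. -/
def Admissible (S : BoxLikeGIFS V E) (w : List E) : Prop :=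
  List.Chain' (fun e e' => S.term e = S.init e') w

/-- `(c_w, d_w)`: width and height of the rectangle `ψ_w([0,1]²)`. -/
def wdims (S : BoxLikeGIFS V E) : List E → ℝ × ℝ
  | [] => (1, 1)
  | e :: w =>
      if S.diag e then (S.a e * (wdims S w).1, S.b e * (wdims S w).2)
      else (S.a e * (wdims S w).2, S.b e * (wdims S w).1)

/-- Whether `T_w` is diagonal (`true`) or anti-diagonal (`false`). -/
def wordDiag (S : BoxLikeGIFS V E) : List E → Bool
  | [] => true
  | e :: w => S.diag e == wordDiag S w

/-- The larger singular value `α₁(w) = max(c_w, d_w)` of `T_w`. -/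
def alpha1 (S : BoxLikeGIFS V E) (w : List E) : ℝ := max (S.wdims w).1 (S.wdims w).2

/-- The smaller singular value `α₂(w) = min(c_w, d_w)` of `T_w`. -/
def alpha2 (S : BoxLikeGIFS V E) (w : List E) : ℝ := min (S.wdims w).1 (S.wdims w).2

/-- Initial vertex of a (nonempty) word. -/
def wordInit [Nonempty V] (S : BoxLikeGIFS V E) (w : List E) : V :=
  (w.head?.map S.init).getD (Classical.arbitrary V)

/-- Terminal vertex of a (nonempty) word. -/
def wordTerm [Nonempty V] (S : BoxLikeGIFS V E) (w : List E) : V :=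
  (w.getLast?.map S.term).getD (Classical.arbitrary V)

/-- `p_w = p_{w_1} ⋯ p_{w_k}`. -/
def wordProb (p : E → ℝ) (w : List E) : ℝ := (w.map p).prod

/-- `τ_w(q)`: given the values `τx v`, `τy v` of the `L^q`-spectra of the two coordinate
projections of `μ_v`, this is the `L^q`-spectrum of the projection of `μ_{t(w)} ∘ ψ_w⁻¹`
onto the longest side of `ψ_w([0,1]²)`, i.e. `τx (t w)` if `π_w = π_x` and `τy (t w)`
otherwise. -/
def wordTau [Nonempty V] (S : BoxLikeGIFS V E) (τx τy : V → ℝ) (w : List E) : ℝ :=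
  if ((S.wdims w).2 ≤ (S.wdims w).1 ↔ S.wordDiag w = true) then τx (S.wordTerm w)
  else τy (S.wordTerm w)

/-- The modified singular value function
`φ^{s,q}(w) = p_w^q α₁(w)^{τ_w(q)} α₂(w)^{s - τ_w(q)}`. -/
def msvf [Nonempty V] (S : BoxLikeGIFS V E) (p : E → ℝ) (τx τy : V → ℝ)
    (s q : ℝ) (w : List E) : ℝ :=
  wordProb p w ^ q * S.alpha1 w ^ (S.wordTau τx τy w) *
    S.alpha2 w ^ (s - S.wordTau τx τy w)

/-- The modified singular value function matrix `A_k^{s,q}`. -/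
def Amat [Nonempty V] [Fintype E] (S : BoxLikeGIFS V E) (p : E → ℝ) (τx τy : V → ℝ)
    (s q : ℝ) (k : ℕ) : Matrix V V ℝ := fun v v' =>
  ∑ f : Fin k → E,
    if S.Admissible (List.ofFn f) ∧ S.wordInit (List.ofFn f) = v ∧
        S.wordTerm (List.ofFn f) = v'
    then S.msvf p τx τy s q (List.ofFn f) else 0

/-- The family `E^*_δ` of admissible words whose shortest side drops below `δ`
exactly at the last letter. -/
def EstarDelta (S : BoxLikeGIFS V E) (δ : ℝ) : Set (List E) :=
  {w | w ≠ [] ∧ S.Admissible w ∧ S.alpha2 w < δ ∧ δ ≤ S.alpha2 w.dropLast}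

end BoxLikeGIFS

/-! ### Partition of the projections, for the splitting proposition -/

/-- The projection family: `(v, false) ↦ μ_v^x` and `(v, true) ↦ μ_v^y`. -/
def projMeas {V : Type*} (μ : V → Measure (ℝ × ℝ)) (i : V × Bool) : Measure ℝ :=
  if i.2 then (μ i.1).map Prod.snd else (μ i.1).map Prod.fst

/-- `A`, `B` is a partition of the projection family `{μ_v^x, μ_v^y}_v` into two disjoint
families of cardinality `#V`, on each of which the `L^q`-spectra exist and share a common
value, and which splits `{μ_v^x, μ_v^y}` for each `v`. -/
def GoodPartition {V : Type*} [Fintype V] (μ : V → Measure (ℝ × ℝ))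
    (A B : Finset (V × Bool)) : Prop :=
  Disjoint A B ∧ A ∪ B = Finset.univ ∧
  A.card = Fintype.card V ∧ B.card = Fintype.card V ∧
  ∃ τA τB : ℝ → ℝ,
    (∀ q : ℝ, 0 ≤ q → ∀ i ∈ A, HasLq1 (projMeas μ i) q (τA q)) ∧
    (∀ q : ℝ, 0 ≤ q → ∀ i ∈ B, HasLq1 (projMeas μ i) q (τB q)) ∧
    ∀ v : V, ((v, false) ∈ A ∧ (v, true) ∈ B) ∨ ((v, false) ∈ B ∧ (v, true) ∈ A)

end LqGIFS

end

open LqGIFS MeasureTheory Filter Set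

noncomputable section
namespace LqGIFS
variable {ι : Type*} [Fintype ι] [DecidableEq ι]

lemma mnorm_nonneg (A : Matrix ι ι ℝ) : 0 ≤ mnorm A :=
  Finset.sum_nonneg fun _ _ => Finset.sum_nonneg fun _ _ => abs_nonneg _

lemma mnorm_mul_le (A B : Matrix ι ι ℝ) : mnorm (A * B) ≤ mnorm A * mnorm B := by
  have hrow : ∀ k, ∑ j, |B k j| ≤ mnorm B := fun k =>
    Finset.single_le_sum (f := fun k => ∑ j, |B k j|)
      (fun i _ => Finset.sum_nonneg fun j _ => abs_nonneg _) (Finset.mem_univ k)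
  calc mnorm (A * B) ≤ ∑ i, ∑ j, ∑ k, |A i k| * |B k j| := by
        refine Finset.sum_le_sum fun i _ => Finset.sum_le_sum fun j _ => ?_
        simpa [Matrix.mul_apply, abs_mul] using
          Finset.abs_sum_le_sum_abs (fun k => A i k * B k j) Finset.univ
    _ = ∑ i, ∑ k, |A i k| * ∑ j, |B k j| := by
        refine Finset.sum_congr rfl fun i _ => ?_
        rw [Finset.sum_comm]
        exact Finset.sum_congr rfl fun k _ => (Finset.mul_sum _ _ _).symm
    _ ≤ ∑ i, ∑ k, |A i k| * mnorm B :=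
        Finset.sum_le_sum fun i _ => Finset.sum_le_sum fun k _ =>
          mul_le_mul_of_nonneg_left (hrow k) (abs_nonneg _)
    _ = mnorm A * mnorm B := by
        simp only [mnorm, Finset.sum_mul]

lemma mnorm_pow_le (A : Matrix ι ι ℝ) : ∀ k : ℕ, 1 ≤ k → mnorm (A ^ k) ≤ mnorm A ^ k := by
  intro k hk
  induction k with
  | zero => omega
  | succ n ih =>
    rcases Nat.eq_zero_or_pos n with hn | hn
    · subst hn; simp
    · rw [pow_succ, pow_succ]
      exact (mnorm_mul_le _ _).trans
        (mul_le_mul_of_nonneg_right (ih hn) (mnorm_nonneg _))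

lemma term_bdd (A : Matrix ι ι ℝ) :
    Filter.IsBoundedUnder (· ≤ ·) Filter.atTop
      (fun k : ℕ => (mnorm (A ^ k)) ^ ((k : ℝ)⁻¹)) := by
  refine isBoundedUnder_of ⟨max 1 (mnorm A), fun k => ?_⟩
  rcases Nat.eq_zero_or_pos k with hk | hk
  · subst hk; simp
  · have hkR : (k : ℝ) ≠ 0 := by exact Nat.cast_ne_zero.mpr (by omega)
    calc (mnorm (A ^ k)) ^ ((k : ℝ)⁻¹)
        ≤ (mnorm A ^ k) ^ ((k : ℝ)⁻¹) :=
          Real.rpow_le_rpow (mnorm_nonneg _) (mnorm_pow_le A k hk) (by positivity)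
      _ = mnorm A := by
          rw [← Real.rpow_natCast (mnorm A) k, ← Real.rpow_mul (mnorm_nonneg _),
            mul_inv_cancel₀ hkR, Real.rpow_one]
      _ ≤ max 1 (mnorm A) := le_max_right _ _

lemma pow_entry_nonneg {A : Matrix ι ι ℝ} (hA : ∀ i j, 0 ≤ A i j) (k : ℕ) :
    ∀ i j, 0 ≤ (A ^ k) i j := by
  induction k with
  | zero => intro i j; rw [pow_zero, Matrix.one_apply]; split <;> norm_num
  | succ n ih =>
    intro i j
    rw [pow_succ, Matrix.mul_apply]
    exact Finset.sum_nonneg fun l _ => mul_nonneg (ih i l) (hA l j)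

lemma pow_entry_le {A B : Matrix ι ι ℝ} {c : ℝ} (hc : 0 ≤ c)
    (hA : ∀ i j, 0 ≤ A i j) (hB : ∀ i j, 0 ≤ B i j)
    (hAB : ∀ i j, A i j ≤ c * B i j) (k : ℕ) :
    ∀ i j, (A ^ k) i j ≤ c ^ k * (B ^ k) i j := by
  induction k with
  | zero => intro i j; simp
  | succ n ih =>
    intro i j
    rw [pow_succ A, pow_succ B, pow_succ c, Matrix.mul_apply, Matrix.mul_apply, Finset.mul_sum]
    refine Finset.sum_le_sum fun l _ => ?_
    calc (A ^ n) i l * A l j ≤ (c ^ n * (B ^ n) i l) * (c * B l j) :=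
          mul_le_mul (ih i l) (hAB l j) (hA l j)
            (mul_nonneg (pow_nonneg hc n) (pow_entry_nonneg hB n i l))
      _ = c ^ n * c * ((B ^ n) i l * B l j) := by ring

lemma mnorm_pow_entrywise_le {A B : Matrix ι ι ℝ} {c : ℝ} (hc : 0 ≤ c)
    (hA : ∀ i j, 0 ≤ A i j) (hB : ∀ i j, 0 ≤ B i j)
    (hAB : ∀ i j, A i j ≤ c * B i j) (k : ℕ) :
    mnorm (A ^ k) ≤ c ^ k * mnorm (B ^ k) := by
  rw [mnorm, mnorm, Finset.mul_sum]
  refine Finset.sum_le_sum fun i _ => ?_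
  rw [Finset.mul_sum]
  refine Finset.sum_le_sum fun j _ => ?_
  rw [abs_of_nonneg (pow_entry_nonneg hA k i j), abs_of_nonneg (pow_entry_nonneg hB k i j)]
  exact pow_entry_le hc hA hB hAB k i j

lemma specRad_lt_one {A B : Matrix ι ι ℝ} {c : ℝ} (hc0 : 0 < c) (hc1 : c < 1)
    (hA : ∀ i j, 0 ≤ A i j) (hAB : ∀ i j, A i j ≤ c * B i j)
    (hB1 : specRad B = 1) : specRad A < 1 := by
  have hB : ∀ i j, 0 ≤ B i j := fun i j => by
    have h : c * 0 ≤ c * B i j := by simpa using (hA i j).trans (hAB i j)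
    exact le_of_mul_le_mul_left h hc0
  set g : ℕ → ℝ := fun k => (mnorm (B ^ k)) ^ ((k : ℝ)⁻¹) with hg
  set f : ℕ → ℝ := fun k => (mnorm (A ^ k)) ^ ((k : ℝ)⁻¹) with hf
  have hf0 : ∀ k, (0 : ℝ) ≤ f k := fun k => Real.rpow_nonneg (mnorm_nonneg _) _
  have hgb : Filter.IsBoundedUnder (· ≤ ·) Filter.atTop g := term_bdd B
  set d : ℝ := (1 + c⁻¹) / 2 with hd
  have hc1' : 1 < c⁻¹ := (one_lt_inv_iff₀).2 ⟨hc0, hc1⟩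
  have hd1 : 1 < d := by rw [hd]; linarith
  have hcd : c * d < 1 := by
    have : c * d = (c + 1) / 2 := by
      rw [hd, mul_div_assoc', mul_add, mul_inv_cancel₀ hc0.ne', mul_one]
    rw [this]; linarith
  have hlim : Filter.limsup g Filter.atTop < d := by
    rw [show Filter.limsup g Filter.atTop = specRad B from rfl, hB1]; exact hd1
  have hev1 : ∀ᶠ k in Filter.atTop, g k < d := eventually_lt_of_limsup_lt hlim hgb
  have hev2 : ∀ᶠ k in Filter.atTop, f k ≤ c * g k := by
    filter_upwards [Filter.eventually_ge_atTop 1] with k hk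
    have hkR : (k : ℝ) ≠ 0 := by exact Nat.cast_ne_zero.mpr (by omega)
    have h1 : mnorm (A ^ k) ≤ c ^ k * mnorm (B ^ k) :=
      mnorm_pow_entrywise_le hc0.le hA hB hAB k
    calc f k ≤ (c ^ k * mnorm (B ^ k)) ^ ((k : ℝ)⁻¹) :=
          Real.rpow_le_rpow (mnorm_nonneg _) h1 (by positivity)
      _ = (c ^ k) ^ ((k : ℝ)⁻¹) * (mnorm (B ^ k)) ^ ((k : ℝ)⁻¹) :=
          Real.mul_rpow (by positivity) (mnorm_nonneg _)
      _ = c * g k := by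
          rw [← Real.rpow_natCast c k, ← Real.rpow_mul hc0.le,
            mul_inv_cancel₀ hkR, Real.rpow_one]
  have hev : ∀ᶠ k in Filter.atTop, f k ≤ c * d := by
    filter_upwards [hev1, hev2] with k h1 h2
    exact h2.trans (mul_le_mul_of_nonneg_left h1.le hc0.le)
  calc specRad A = Filter.limsup f Filter.atTop := rfl
    _ ≤ c * d := Filter.limsup_le_of_le
        (Filter.isCoboundedUnder_le_of_le Filter.atTop hf0) hev
    _ < 1 := hcd

lemma specRad_key {V E : Type} [Fintype E] [DecidableEq E] [Nonempty E]
    (S : BoxLikeGIFS V E) (p : E → ℝ) (hp : ∀ e, 0 < p e) (q : ℝ)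
    {x y x' y' : ℝ} (hx : x ≤ x') (hy : y ≤ y')
    (h1 : specRad (S.Fmat p q x y) = 1) (h2 : specRad (S.Fmat p q x' y') = 1) :
    x = x' ∧ y = y' := by
  by_contra hcon
  have hlt : x < x' ∨ y < y' := by
    rcases eq_or_lt_of_le hx with h | h
    · rcases eq_or_lt_of_le hy with h' | h'
      · exact absurd ⟨h, h'⟩ hcon
      · exact Or.inr h'
    · exact Or.inl h
  have hne : (Finset.univ : Finset E).Nonempty := Finset.univ_nonempty
  set c : ℝ := Finset.univ.sup' hne (fun e => S.a e ^ (x' - x) * S.b e ^ (y' - y)) with hc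
  have hc0 : 0 < c := by
    obtain ⟨e⟩ := ‹Nonempty E›
    refine lt_of_lt_of_le ?_ (Finset.le_sup' _ (Finset.mem_univ e))
    have ha := S.a_mem e; have hb := S.b_mem e
    exact mul_pos (Real.rpow_pos_of_pos ha.1 _) (Real.rpow_pos_of_pos hb.1 _)
  have hc1 : c < 1 := by
    rw [hc, Finset.sup'_lt_iff]
    intro e _
    have ha := S.a_mem e; have hb := S.b_mem e
    have hdx : 0 ≤ x' - x := by linarith
    have hdy : 0 ≤ y' - y := by linarith
    rcases hlt with h | h
    · have h1' : S.a e ^ (x' - x) < 1 := Real.rpow_lt_one ha.1.le ha.2 (by linarith)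
      have h2' : S.b e ^ (y' - y) ≤ 1 := Real.rpow_le_one hb.1.le hb.2.le hdy
      calc S.a e ^ (x' - x) * S.b e ^ (y' - y)
          ≤ S.a e ^ (x' - x) * 1 :=
            mul_le_mul_of_nonneg_left h2' (Real.rpow_nonneg ha.1.le _)
        _ < 1 := by rwa [mul_one]
    · have h1' : S.a e ^ (x' - x) ≤ 1 := Real.rpow_le_one ha.1.le ha.2.le hdx
      have h2' : S.b e ^ (y' - y) < 1 := Real.rpow_lt_one hb.1.le hb.2 (by linarith)
      calc S.a e ^ (x' - x) * S.b e ^ (y' - y)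
          ≤ 1 * S.b e ^ (y' - y) :=
            mul_le_mul_of_nonneg_right h1' (Real.rpow_nonneg hb.1.le _)
        _ < 1 := by rwa [one_mul]
  have hA : ∀ i j, 0 ≤ S.Fmat p q x' y' i j := by
    intro i j
    by_cases h : S.term i = S.init j
    · simp only [BoxLikeGIFS.Fmat, FmatG, h, if_true]
      have := hp j; have := (S.a_mem j).1; have := (S.b_mem j).1; positivity
    · simp [BoxLikeGIFS.Fmat, FmatG, h]
  have hAB : ∀ i j, S.Fmat p q x' y' i j ≤ c * S.Fmat p q x y i j := by
    intro i j
    by_cases h : S.term i = S.init j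
    · simp only [BoxLikeGIFS.Fmat, FmatG, h, if_true]
      have ha := S.a_mem j; have hb := S.b_mem j
      have e1 : S.a j ^ x' = S.a j ^ (x' - x) * S.a j ^ x := by
        rw [← Real.rpow_add ha.1, sub_add_cancel]
      have e2 : S.b j ^ y' = S.b j ^ (y' - y) * S.b j ^ y := by
        rw [← Real.rpow_add hb.1, sub_add_cancel]
      have hle : S.a j ^ (x' - x) * S.b j ^ (y' - y) ≤ c :=
        Finset.le_sup' (fun e => S.a e ^ (x' - x) * S.b e ^ (y' - y)) (Finset.mem_univ j)
      have hpos : (0 : ℝ) ≤ p j ^ q * (S.a j ^ x * S.b j ^ y) := by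
        have := hp j; have := (S.a_mem j).1; have := (S.b_mem j).1; positivity
      calc p j ^ q * S.a j ^ x' * S.b j ^ y'
          = (S.a j ^ (x' - x) * S.b j ^ (y' - y)) * (p j ^ q * (S.a j ^ x * S.b j ^ y)) := by
            rw [e1, e2]; ring
        _ ≤ c * (p j ^ q * (S.a j ^ x * S.b j ^ y)) :=
            mul_le_mul_of_nonneg_right hle hpos
        _ = c * (p j ^ q * S.a j ^ x * S.b j ^ y) := by ring
    · simp [BoxLikeGIFS.Fmat, FmatG, h]
  have hfin := specRad_lt_one hc0 hc1 hA hAB h1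
  rw [h2] at hfin
  exact lt_irrefl 1 hfin

end LqGIFS
end

/-- equality of the two constrained solution sets.  All `T_e` diagonal,
`q ≥ 0` fixed: the set of pairs `(x,y)` with `ρ(F^{(q)}_{x,y}) = 1` and `x` between
`min/max of {τ_A(q), γ_B(q) − τ_B(q)}` equals the set of such pairs with `y` between
`min/max of {τ_B(q), γ_A(q) − τ_A(q)}`. -/
theorem statement11
    {V E : Type} [Fintype V] [Fintype E] [Nonempty V]
    (S : BoxLikeGIFS V E) (hSC : S.StronglyConnected)
    (hdiag : ∀ e : E, S.diag e = true)
    (p : E → ℝ) (hp : S.IsWeights p)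
    (μ : V → Measure (ℝ × ℝ)) (hμ : S.IsGDMeasure p μ)
    (τA τB : ℝ → ℝ)
    (hτA : ∀ q : ℝ, 0 ≤ q → ∀ v : V, HasLq1 ((μ v).map Prod.fst) q (τA q))
    (hτB : ∀ q : ℝ, 0 ≤ q → ∀ v : V, HasLq1 ((μ v).map Prod.snd) q (τB q))
    (q : ℝ) (hq : 0 ≤ q)
    (γA γB : ℝ)
    (hγA : specRad (S.Fmat p q (τA q) (γA - τA q)) = 1)
    (hγB : specRad (S.Fmat p q (γB - τB q) (τB q)) = 1) :
    {z : ℝ × ℝ | specRad (S.Fmat p q z.1 z.2) = 1 ∧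
        min (τA q) (γB - τB q) ≤ z.1 ∧ z.1 ≤ max (τA q) (γB - τB q)} =
    {z : ℝ × ℝ | specRad (S.Fmat p q z.1 z.2) = 1 ∧
        min (τB q) (γA - τA q) ≤ z.2 ∧ z.2 ≤ max (τB q) (γA - τA q)} := by
  obtain ⟨e0, -⟩ := S.edge_exists (Classical.arbitrary V)
  haveI : Nonempty E := ⟨e0⟩
  set t1 := τA q with ht1
  set t2 := γA - τA q with ht2
  set s1 := γB - τB q with hs1
  set s2 := τB q with hs2
  have hpp := hp.1
  have key : ∀ {x y x' y' : ℝ}, x ≤ x' → y ≤ y' →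
      specRad (S.Fmat p q x y) = 1 → specRad (S.Fmat p q x' y') = 1 →
      x = x' ∧ y = y' := fun hx hy h1 h2 => specRad_key S p hpp q hx hy h1 h2
  ext ⟨x, y⟩
  simp only [Set.mem_setOf_eq]
  constructor
  · rintro ⟨hz, hmin, hmax⟩
    refine ⟨hz, ?_, ?_⟩
    · by_contra hcon
      push_neg at hcon
      rw [lt_min_iff] at hcon
      rcases le_or_gt x t1 with h | h
      · exact absurd (key h hcon.2.le hz hγA).2 (ne_of_lt hcon.2)
      · have hx1 : x ≤ s1 := le_of_not_gt fun hcx => absurd hmax (not_le.2 (max_lt h hcx))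
        exact absurd (key hx1 hcon.1.le hz hγB).2 (ne_of_lt hcon.1)
    · by_contra hcon
      push_neg at hcon
      rw [max_lt_iff] at hcon
      rcases le_or_gt t1 x with h | h
      · exact absurd (key h hcon.2.le hγA hz).2 (ne_of_lt hcon.2)
      · have hx1 : s1 ≤ x := le_of_not_gt fun hcx => absurd hmin (not_le.2 (lt_min h hcx))
        exact absurd (key hx1 hcon.1.le hγB hz).2 (ne_of_lt hcon.1)
  · rintro ⟨hz, hmin, hmax⟩
    refine ⟨hz, ?_, ?_⟩
    · by_contra hcon
      push_neg at hcon
      rw [lt_min_iff] at hcon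
      rcases le_or_gt y t2 with h | h
      · exact absurd (key hcon.1.le h hz hγA).1 (ne_of_lt hcon.1)
      · have hy1 : y ≤ s2 := le_of_not_gt fun hcy => absurd hmax (not_le.2 (max_lt hcy h))
        exact absurd (key hcon.2.le hy1 hz hγB).1 (ne_of_lt hcon.2)
    · by_contra hcon
      push_neg at hcon
      rw [max_lt_iff] at hcon
      rcases le_or_gt t2 y with h | h
      · exact absurd (key hcon.1.le h hγA hz).1 (ne_of_lt hcon.1)
      · have hy1 : s2 ≤ y := le_of_not_gt fun hcy => absurd hmin (not_le.2 (lt_min hcy h))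
        exact absurd (key hcon.2.le hy1 hγB hz).1 (ne_of_lt hcon.2)
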